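/- arXiv:2007.00724 — 2 statements merged into one kernel-verified Lean document; each statement's English description precedes it below -/
import Mathlib

section
/- Let p be a Kostlan random polynomial of degree d and set p̂(x̂,ŷ) = p(d^{-1/2} x̂, d^{-1/2} ŷ). Then there is a constant M > 0 independent of d such that E[ sup_{(x̂,ŷ) ∈ D₂} |p̂(x̂,ŷ)| ] ≤ M, where D₂ is the closed disk of radius 2 centered at the origin; in particular one may take M = √(2/π) Σ_{k≥0} k·2^k / √(⌊k/2⌋!), and this series converges. -/
/-!
On the disk of radius 2 the rescaled monomial `x^j y^k` is at most `2^(j+k) d^(-(j+k)/2)`, and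
`d!/(d-j-k)! ≤ d^(j+k)` cancels that power of `d` against the Kostlan weight, leaving
`|a_{j,k}| 2^(j+k) / √(j! k!)` uniformly in `d`. Taking expectations gives `√(2/π)` times a
deterministic sum, which is grouped by total degree `n = j + k`: there are `n + 1` pairs, and the
larger of `j, k` is at least `⌈n/2⌉`. The resulting series converges because
`|C|^m / √m!` is the geometric mean of `(2C²)^m / m!` and `2^(-m)`.
-/

open MeasureTheory ProbabilityTheory

/-- The degree-`d` Kostlan random polynomial built from the coefficients `a (j,k)`. -/
noncomputable def kostlan (d : ℕ) (a : ℕ × ℕ → ℝ) (x y : ℝ) : ℝ :=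
  ∑ jk ∈ (Finset.range (d + 1) ×ˢ Finset.range (d + 1)).filter
      (fun jk => jk.1 + jk.2 ≤ d),
    a jk * Real.sqrt (d.factorial /
      ((d - jk.1 - jk.2).factorial * jk.1.factorial * jk.2.factorial)) *
      x ^ jk.1 * y ^ jk.2

/-- The closed disk of radius 2 centered at the origin in `ℝ²`. -/
def diskTwo : Set (ℝ × ℝ) := {v : ℝ × ℝ | v.1 ^ 2 + v.2 ^ 2 ≤ 4}

open Real Finset
open scoped Nat NNReal

theorem summable_comp_div_two {f : ℕ → ℝ} (hf : Summable f) : Summable fun k => f (k / 2) :=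
  Summable.even_add_odd (by simpa using hf) (by simpa [Nat.mul_add_div] using hf)

theorem le_add_div_two_of_sq_le_mul {a x y : ℝ} (hx : 0 ≤ x) (hy : 0 ≤ y) (h : a ^ 2 ≤ x * y) :
    a ≤ (x + y) / 2 := by
  nlinarith [sq_nonneg (x - y)]

theorem summable_pow_div_sqrt_factorial (C : ℝ) : Summable fun m : ℕ => C ^ m / √(m ! : ℝ) := by
  have hmaj : Summable fun m : ℕ => ((2 * C ^ 2) ^ m / m ! + (1 / 2 : ℝ) ^ m) / 2 :=
    ((Real.summable_pow_div_factorial _).add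
      (summable_geometric_of_lt_one (by norm_num) (by norm_num))).div_const 2
  refine Summable.of_norm_bounded hmaj fun m => le_add_div_two_of_sq_le_mul (by positivity)
    (by positivity) (le_of_eq ?_)
  rw [norm_div, norm_pow, Real.norm_of_nonneg (sqrt_nonneg _), div_pow, sq_sqrt (by positivity),
    ← pow_mul, mul_comm m, pow_mul, Real.norm_eq_abs, sq_abs, div_mul_eq_mul_div,
    ← mul_pow]
  congr 2; ring

theorem mul_two_pow_le_four_mul_eight_pow_div_two (k : ℕ) : k * 2 ^ k ≤ 4 * 8 ^ (k / 2) := by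
  have hk : k ≤ 2 * (k / 2) + 1 := by omega
  have hlin : 2 * (k / 2) + 1 ≤ 2 * 2 ^ (k / 2) := by
    have := Nat.lt_two_pow_self (n := k / 2)
    omega
  have hpow : 2 ^ k ≤ 2 * 4 ^ (k / 2) := by
    calc 2 ^ k ≤ 2 ^ (2 * (k / 2) + 1) := Nat.pow_le_pow_right two_pos hk
      _ = 2 * 4 ^ (k / 2) := by rw [pow_succ, pow_mul]; ring
  calc k * 2 ^ k ≤ (2 * 2 ^ (k / 2)) * (2 * 4 ^ (k / 2)) := Nat.mul_le_mul (hk.trans hlin) hpow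
    _ = 4 * 8 ^ (k / 2) := by rw [show 8 = 2 * 4 by rfl, mul_pow]; ring

theorem summable_kostlan_series :
    Summable fun k : ℕ => (k : ℝ) * 2 ^ k / √((k / 2)! : ℝ) := by
  refine .of_nonneg_of_le (fun k => by positivity) (fun k => ?_)
    (summable_comp_div_two ((summable_pow_div_sqrt_factorial 8).mul_left 4))
  rw [← mul_div_assoc]
  exact div_le_div_of_nonneg_right (by exact_mod_cast mul_two_pow_le_four_mul_eight_pow_div_two k)
    (sqrt_nonneg _)

theorem integral_Ioi_mul_exp_neg_mul_sq {b : ℝ} (hb : 0 < b) :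
    ∫ r in Set.Ioi (0 : ℝ), r * exp (-b * r ^ 2) = (2 * b)⁻¹ := by
  apply Complex.ofReal_injective
  rw [← integral_complex_ofReal]
  push_cast
  exact integral_mul_cexp_neg_mul_sq (by simpa using hb)

theorem integral_abs_gaussianReal_zero (v : ℝ≥0) :
    ∫ x, |x| ∂gaussianReal 0 v = √(2 * v / π) := by
  rcases eq_or_ne v 0 with rfl | hv
  · simp [gaussianReal_zero_var]
  rw [integral_gaussianReal_eq_integral_smul hv]
  have hintegrand : ∀ x : ℝ, gaussianPDFReal 0 v x • |x|
      = (√(2 * π * v))⁻¹ * (|x| * exp (-(2 * v : ℝ)⁻¹ * |x| ^ 2)) := fun x => by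
    rw [gaussianPDFReal, sq_abs, smul_eq_mul]; ring_nf
  simp_rw [hintegrand, integral_const_mul]
  rw [integral_comp_abs (f := fun x => x * exp (-(2 * v : ℝ)⁻¹ * x ^ 2)),
    integral_Ioi_mul_exp_neg_mul_sq (by positivity),
    show 2 * (v : ℝ) / π = (2 * v) ^ 2 / (2 * π * v) by field_simp, sqrt_div' _ (by positivity),
    sqrt_sq (by positivity)]
  field_simp

namespace ProbabilityTheory

variable {Ω : Type*} {mΩ : MeasurableSpace Ω} {P : Measure Ω} {X : Ω → ℝ}

theorem HasLaw.integrable_abs_of_gaussianReal {μ : ℝ} {v : ℝ≥0}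
    (hX : HasLaw X (gaussianReal μ v) P) : Integrable (fun ω => |X ω|) P := by
  have h : Integrable (fun x : ℝ => |x|) (P.map X) := by
    rw [hX.map_eq]
    exact ((memLp_id_gaussianReal 1).integrable le_rfl).abs
  exact (integrable_map_measure continuous_abs.aestronglyMeasurable hX.aemeasurable).1 h

theorem HasLaw.integral_abs_of_gaussianReal_zero {v : ℝ≥0} (hX : HasLaw X (gaussianReal 0 v) P) :
    ∫ ω, |X ω| ∂P = √(2 * v / π) := by
  rw [← integral_abs_gaussianReal_zero v]
  exact hX.integral_comp continuous_abs.aestronglyMeasurable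

end ProbabilityTheory

theorem factorial_le_factorial_sub_mul_pow {n d : ℕ} (h : n ≤ d) : d ! ≤ (d - n)! * d ^ n := by
  rw [← Nat.factorial_mul_descFactorial h]
  exact Nat.mul_le_mul_left _ (Nat.descFactorial_le_pow d n)

theorem sqrt_multinomial_mul_rpow_le {d j k : ℕ} (h : j + k ≤ d) :
    √((d ! : ℝ) / ((d - j - k)! * j ! * k !)) * ((d : ℝ) ^ (-(1 / 2 : ℝ))) ^ (j + k)
      ≤ 1 / √((j ! : ℝ) * k !) := by
  have hpow : ((d : ℝ) ^ (-(1 / 2 : ℝ))) ^ (j + k) = √(((d : ℝ) ^ (j + k))⁻¹) := by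
    rw [rpow_pow_comm d.cast_nonneg, rpow_neg (by positivity), ← sqrt_eq_rpow, sqrt_inv]
  have hfact : (d ! : ℝ) / ((d - j - k)! * d ^ (j + k)) ≤ 1 := by
    rw [Nat.sub_sub]
    exact div_le_one_of_le₀ (by exact_mod_cast factorial_le_factorial_sub_mul_pow h) (by positivity)
  calc √((d ! : ℝ) / ((d - j - k)! * j ! * k !)) * ((d : ℝ) ^ (-(1 / 2 : ℝ))) ^ (j + k)
      = √((d ! : ℝ) / ((d - j - k)! * d ^ (j + k)) * ((j ! : ℝ) * k !)⁻¹) := by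
        rw [hpow, ← sqrt_mul (by positivity)]
        ring_nf
    _ ≤ √(1 * ((j ! : ℝ) * k !)⁻¹) := by gcongr
    _ = 1 / √((j ! : ℝ) * k !) := by rw [one_mul, sqrt_inv, one_div]

def kostlanIndex (d : ℕ) : Finset (ℕ × ℕ) :=
  (range (d + 1) ×ˢ range (d + 1)).filter fun jk => jk.1 + jk.2 ≤ d

theorem abs_kostlan_rescaled_le (d : ℕ) (b : ℕ × ℕ → ℝ) {R x y : ℝ} (hx : |x| ≤ R)
    (hy : |y| ≤ R) :
    |kostlan d b ((d : ℝ) ^ (-(1 / 2 : ℝ)) * x) ((d : ℝ) ^ (-(1 / 2 : ℝ)) * y)|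
      ≤ ∑ jk ∈ kostlanIndex d, |b jk| * (R ^ (jk.1 + jk.2) / √((jk.1 ! : ℝ) * jk.2 !)) := by
  set c := (d : ℝ) ^ (-(1 / 2 : ℝ))
  have hc : 0 ≤ c := rpow_nonneg d.cast_nonneg _
  refine (abs_sum_le_sum_abs _ _).trans (sum_le_sum fun jk hjk => ?_)
  obtain ⟨j, k⟩ := jk
  have hjk : j + k ≤ d := (mem_filter.1 hjk).2
  have hR : 0 ≤ R := (abs_nonneg x).trans hx
  rw [abs_mul, abs_mul, abs_mul, abs_pow, abs_pow, abs_mul, abs_mul, abs_of_nonneg hc,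
    abs_of_nonneg (sqrt_nonneg _)]
  calc |b (j, k)| * √((d ! : ℝ) / ((d - j - k)! * j ! * k !)) * (c * |x|) ^ j * (c * |y|) ^ k
      ≤ |b (j, k)| * √((d ! : ℝ) / ((d - j - k)! * j ! * k !)) * (c * R) ^ j * (c * R) ^ k := by
        gcongr
    _ = |b (j, k)| * (√((d ! : ℝ) / ((d - j - k)! * j ! * k !)) * c ^ (j + k)) * R ^ (j + k) := by
        ring
    _ ≤ |b (j, k)| * (1 / √((j ! : ℝ) * k !)) * R ^ (j + k) := by
        gcongr
        exact sqrt_multinomial_mul_rpow_le hjk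
    _ = |b (j, k)| * (R ^ (j + k) / √((j ! : ℝ) * k !)) := by ring

theorem factorial_succ_div_two_le_factorial_mul (j k : ℕ) : ((j + k + 1) / 2)! ≤ j ! * k ! := by
  wlog h : j ≤ k
  · simpa only [add_comm j, mul_comm (j !)] using this k j (by omega)
  calc ((j + k + 1) / 2)! ≤ k ! := Nat.factorial_le (by omega)
    _ ≤ j ! * k ! := Nat.le_mul_of_pos_left _ j.factorial_pos

theorem sum_kostlanIndex_le_tsum (d : ℕ) :
    ∑ jk ∈ kostlanIndex d, (2 : ℝ) ^ (jk.1 + jk.2) / √((jk.1 ! : ℝ) * jk.2 !)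
      ≤ ∑' k : ℕ, (k : ℝ) * 2 ^ k / √((k / 2)! : ℝ) := by
  set G : ℕ → ℝ := fun n => 2 ^ n / √((n + 1) / 2)!
  have hfiber : ∀ n, ∑ jk ∈ (kostlanIndex d).filter (fun jk => jk.1 + jk.2 = n),
      G (jk.1 + jk.2) ≤ (n + 1) * G n := fun n => by
    rw [sum_congr rfl fun jk hjk => by rw [(mem_filter.1 hjk).2], sum_const, nsmul_eq_mul]
    refine mul_le_mul_of_nonneg_right ?_ (by positivity)
    have hsub : (kostlanIndex d).filter (fun jk => jk.1 + jk.2 = n) ⊆ antidiagonal n :=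
      fun jk hjk => mem_antidiagonal.2 (mem_filter.1 hjk).2
    exact_mod_cast (card_le_card hsub).trans_eq (Nat.card_antidiagonal n)
  calc ∑ jk ∈ kostlanIndex d, (2 : ℝ) ^ (jk.1 + jk.2) / √((jk.1 ! : ℝ) * jk.2 !)
      ≤ ∑ jk ∈ kostlanIndex d, G (jk.1 + jk.2) := sum_le_sum fun jk _ => by
        dsimp only [G]
        gcongr
        exact_mod_cast factorial_succ_div_two_le_factorial_mul jk.1 jk.2
    _ = ∑ n ∈ range (d + 1), ∑ jk ∈ (kostlanIndex d).filter (fun jk => jk.1 + jk.2 = n),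
          G (jk.1 + jk.2) := by
        refine (sum_fiberwise_of_maps_to (fun jk hjk => ?_) _).symm
        simpa [Nat.lt_succ_iff] using (mem_filter.1 hjk).2
    _ ≤ ∑ n ∈ range (d + 1), (n + 1) * G n := sum_le_sum fun n _ => hfiber n
    _ ≤ ∑ n ∈ range (d + 1), ((n + 1 : ℕ) : ℝ) * 2 ^ (n + 1) / √((n + 1) / 2)! :=
        sum_le_sum fun n _ => by
          rw [mul_div_assoc]
          push_cast
          dsimp only [G]
          gcongr
          · norm_num
          · omega
    _ ≤ ∑' k : ℕ, (k : ℝ) * 2 ^ k / √((k / 2)! : ℝ) := by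
        rw [summable_kostlan_series.tsum_eq_zero_add, CharP.cast_eq_zero, zero_mul, zero_div,
          zero_add]
        exact Summable.sum_le_tsum _ (fun _ _ => by positivity)
          ((summable_nat_add_iff 1).2 summable_kostlan_series)

theorem abs_le_two_of_mem_diskTwo {v : ℝ × ℝ} (hv : v ∈ diskTwo) : |v.1| ≤ 2 ∧ |v.2| ≤ 2 := by
  have hv : v.1 ^ 2 + v.2 ^ 2 ≤ 4 := hv
  exact ⟨abs_le_of_sq_le_sq (by nlinarith [sq_nonneg v.2]) zero_le_two,
    abs_le_of_sq_le_sq (by nlinarith [sq_nonneg v.1]) zero_le_two⟩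

theorem kostlan_rescaled_sup_bound_general
    {Ω : Type*} [MeasureSpace Ω]
    (d : ℕ) (a : ℕ × ℕ → Ω → ℝ)
    (hmeas : ∀ jk, Measurable (a jk))
    (hgauss : ∀ jk, Measure.map (a jk) ℙ = gaussianReal 0 1) :
    Summable (fun k : ℕ => (k : ℝ) * 2 ^ k / Real.sqrt ((k / 2).factorial)) ∧
    ∫ ω, ⨆ v : diskTwo, |kostlan d (fun jk => a jk ω)
        ((d : ℝ) ^ (-(1/2 : ℝ)) * (v : ℝ × ℝ).1) ((d : ℝ) ^ (-(1/2 : ℝ)) * (v : ℝ × ℝ).2)| ∂ℙ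
      ≤ Real.sqrt (2 / Real.pi) *
          ∑' k : ℕ, (k : ℝ) * 2 ^ k / Real.sqrt ((k / 2).factorial) := by
  refine ⟨summable_kostlan_series, ?_⟩
  have : Nonempty diskTwo := ⟨⟨(0, 0), by norm_num [diskTwo]⟩⟩
  have hlaw (jk : ℕ × ℕ) : HasLaw (a jk) (gaussianReal 0 1) ℙ :=
    ⟨(hmeas jk).aemeasurable, hgauss jk⟩
  set w : ℕ × ℕ → ℝ := fun jk => 2 ^ (jk.1 + jk.2) / √((jk.1 ! : ℝ) * jk.2 !)
  have hint : Integrable (fun ω => ∑ jk ∈ kostlanIndex d, |a jk ω| * w jk) ℙ :=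
    integrable_finsetSum _ fun jk _ => (hlaw jk).integrable_abs_of_gaussianReal.mul_const _
  calc ∫ ω, ⨆ v : diskTwo, |kostlan d (fun jk => a jk ω)
        ((d : ℝ) ^ (-(1/2 : ℝ)) * (v : ℝ × ℝ).1) ((d : ℝ) ^ (-(1/2 : ℝ)) * (v : ℝ × ℝ).2)| ∂ℙ
      ≤ ∫ ω, ∑ jk ∈ kostlanIndex d, |a jk ω| * w jk ∂ℙ :=
        integral_mono_of_nonneg (ae_of_all _ fun _ => Real.iSup_nonneg fun _ => abs_nonneg _) hint
          (ae_of_all _ fun _ => ciSup_le fun v => abs_kostlan_rescaled_le d _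
            (abs_le_two_of_mem_diskTwo v.2).1 (abs_le_two_of_mem_diskTwo v.2).2)
    _ = √(2 / π) * ∑ jk ∈ kostlanIndex d, w jk := by
        rw [integral_finsetSum _ fun jk _ => (hlaw jk).integrable_abs_of_gaussianReal.mul_const _,
          mul_sum]
        refine sum_congr rfl fun jk _ => ?_
        rw [integral_mul_const, (hlaw jk).integral_abs_of_gaussianReal_zero]
        norm_num
    _ ≤ √(2 / π) * ∑' k : ℕ, (k : ℝ) * 2 ^ k / √((k / 2)! : ℝ) := by
        gcongr
        exact sum_kostlanIndex_le_tsum d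

/-- For the rescaled Kostlan polynomial
`p̂(x̂,ŷ) = p(d^{-1/2} x̂, d^{-1/2} ŷ)`, the expected sup over the closed disk of radius 2
is bounded by `M = √(2/π) Σ_{k≥0} k 2^k / √(⌊k/2⌋!)`, a convergent series, uniformly
in `d`. -/
theorem kostlan_rescaled_sup_bound
    {Ω : Type*} [MeasureSpace Ω] [IsProbabilityMeasure (ℙ : Measure Ω)]
    (d : ℕ) (hd : 1 ≤ d) (a : ℕ × ℕ → Ω → ℝ)
    (hmeas : ∀ jk, Measurable (a jk))
    (hgauss : ∀ jk, Measure.map (a jk) ℙ = gaussianReal 0 1)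
    (hindep : iIndepFun a ℙ) :
    Summable (fun k : ℕ => (k : ℝ) * 2 ^ k / Real.sqrt ((k / 2).factorial)) ∧
    ∫ ω, ⨆ v : diskTwo, |kostlan d (fun jk => a jk ω)
        ((d : ℝ) ^ (-(1/2 : ℝ)) * (v : ℝ × ℝ).1) ((d : ℝ) ^ (-(1/2 : ℝ)) * (v : ℝ × ℝ).2)| ∂ℙ
      ≤ Real.sqrt (2 / Real.pi) *
          ∑' k : ℕ, (k : ℝ) * 2 ^ k / Real.sqrt ((k / 2).factorial) :=
  kostlan_rescaled_sup_bound_general d a hmeas hgauss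
end

section
/- Fix 0 < r, t with rt > 0. As d → ∞, the integral I_d = ∫₀^{2π} (1 + rt cos u)^d · rt cos u du satisfies I_d = (1+rt)^d √(2π rt(1+rt)/d) (1 + O(1/d)); consequently (1/d) log( 2π I_d ) → log(1+rt) as d → ∞. -/
open Filter

section LaplaceAux
open Real MeasureTheory Set intervalIntegral

set_option maxHeartbeats 1000000

lemma aux_sq_le_four_exp {y : ℝ} (hy : 0 ≤ y) : y ^ 2 ≤ 4 * Real.exp y := by
  have h := Real.add_one_le_exp (y / 2)
  have h2 : Real.exp (y / 2) ^ 2 = Real.exp y := by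
    rw [sq, ← Real.exp_add, add_halves]
  nlinarith [Real.exp_pos (y / 2)]

lemma aux_le_exp {y : ℝ} (hy : 0 ≤ y) : y ≤ Real.exp y := by
  have := Real.add_one_le_exp y; linarith

lemma aux_one_sub_le_exp (x : ℝ) : 1 - x ≤ Real.exp (-x) := by
  have := Real.add_one_le_exp (-x); linarith

lemma aux_exp_le_one_sub {x : ℝ} (h0 : 0 ≤ x) (h1 : x ≤ 1/4) :
    Real.exp (-(x + x ^ 2)) ≤ 1 - x := by
  have h2 : 1 + (x + x ^ 2) / 2 ≤ Real.exp ((x + x ^ 2) / 2) := by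
    have := Real.add_one_le_exp ((x + x ^ 2) / 2); linarith
  have h3 : Real.exp ((x + x ^ 2) / 2) ^ 2 = Real.exp (x + x ^ 2) := by
    rw [sq, ← Real.exp_add, add_halves]
  have h4 : (1 + (x + x ^ 2) / 2) ^ 2 ≤ Real.exp (x + x ^ 2) := by
    rw [← h3]
    apply pow_le_pow_left₀ (by nlinarith) h2
  have h6 : 1 ≤ (1 - x) * (1 + (x + x ^ 2) / 2) ^ 2 := by
    nlinarith [sq_nonneg x, pow_nonneg h0 3, pow_nonneg h0 4, pow_nonneg h0 5, sq_nonneg (x*x)]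
  have h5 : 1 ≤ (1 - x) * Real.exp (x + x ^ 2) := by
    calc (1:ℝ) ≤ (1 - x) * (1 + (x + x ^ 2) / 2) ^ 2 := h6
      _ ≤ (1 - x) * Real.exp (x + x ^ 2) := by
          apply mul_le_mul_of_nonneg_left h4 (by linarith)
  rw [Real.exp_neg]
  rw [inv_le_iff_one_le_mul₀ (Real.exp_pos _)]
  linarith [h5]

lemma aux_mom2 {β : ℝ} (u : ℝ) (hβ : 0 < β) : u ^ 2 * Real.exp (-(β * u ^ 2)) ≤ 1 / β := by
  have h1 : β * u ^ 2 ≤ Real.exp (β * u ^ 2) := aux_le_exp (by positivity)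
  have h2 : u ^ 2 ≤ Real.exp (β * u ^ 2) / β := by
    rw [le_div_iff₀ hβ]; linarith
  calc u ^ 2 * Real.exp (-(β * u ^ 2))
      ≤ Real.exp (β * u ^ 2) / β * Real.exp (-(β * u ^ 2)) := by
        exact mul_le_mul_of_nonneg_right h2 (Real.exp_pos _).le
    _ = 1 / β := by
        rw [div_mul_eq_mul_div, ← Real.exp_add]
        simp

lemma aux_mom4 {β : ℝ} (u : ℝ) (hβ : 0 < β) : u ^ 4 * Real.exp (-(β * u ^ 2)) ≤ 4 / β ^ 2 := by
  have h1 : (β * u ^ 2) ^ 2 ≤ 4 * Real.exp (β * u ^ 2) := aux_sq_le_four_exp (by positivity)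
  have h2 : u ^ 4 ≤ 4 * Real.exp (β * u ^ 2) / β ^ 2 := by
    rw [le_div_iff₀ (by positivity : (0:ℝ) < β ^ 2)]; nlinarith
  calc u ^ 4 * Real.exp (-(β * u ^ 2))
      ≤ 4 * Real.exp (β * u ^ 2) / β ^ 2 * Real.exp (-(β * u ^ 2)) := by
        exact mul_le_mul_of_nonneg_right h2 (Real.exp_pos _).le
    _ = 4 / β ^ 2 := by
        rw [div_mul_eq_mul_div, mul_assoc, ← Real.exp_add]
        simp

lemma aux_exp_sub_one_le {E : ℝ} (hE0 : 0 ≤ E) (hE1 : E ≤ 1) :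
    Real.exp E - 1 ≤ E * Real.exp 1 := by
  have h := aux_one_sub_le_exp E
  have h2 : Real.exp E * (1 - E) ≤ Real.exp E * Real.exp (-E) :=
    mul_le_mul_of_nonneg_left h (Real.exp_pos _).le
  rw [← Real.exp_add] at h2
  simp only [add_neg_cancel, Real.exp_zero] at h2
  have h3 : Real.exp E ≤ Real.exp 1 := Real.exp_le_exp.mpr hE1
  nlinarith [(Real.exp_pos E).le]

lemma aux_sandwich {W Q co E v : ℝ} (hQ : 0 < Q)
    (hlo : Q * Real.exp (-E) ≤ W) (hup : W ≤ Q * Real.exp E)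
    (hcos1 : co ≤ 1) (hcoslb : 1 - v ≤ co) (hW0 : 0 ≤ W)
    (hE0 : 0 ≤ E) (hE1 : E ≤ 1) (hv0 : 0 ≤ v) (hv1 : v ≤ 1) :
    |W * co - Q| ≤ Q * (Real.exp 1 * E + Real.exp 1 * v) := by
  have he1 : (1:ℝ) ≤ Real.exp 1 := by
    have := Real.add_one_le_exp (1:ℝ); linarith
  have hE1e := aux_exp_sub_one_le hE0 hE1
  have hee : 1 - E ≤ Real.exp (-E) := aux_one_sub_le_exp E
  rw [abs_le]; constructor
  · have l1 : Q * Real.exp (-E) * (1 - v) ≤ W * co :=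
      mul_le_mul hlo hcoslb (by linarith) hW0
    have l2 : Q * (1 - E) * (1 - v) ≤ Q * Real.exp (-E) * (1 - v) :=
      mul_le_mul_of_nonneg_right (mul_le_mul_of_nonneg_left hee hQ.le) (by linarith)
    nlinarith [mul_nonneg (mul_nonneg hQ.le hE0) hv0, mul_nonneg hQ.le hE0,
      mul_nonneg hQ.le hv0]
  · have u1 : W * co ≤ W := by
      calc W * co ≤ W * 1 := mul_le_mul_of_nonneg_left hcos1 hW0
        _ = W := mul_one _
    have h13 := mul_le_mul_of_nonneg_left hE1e hQ.le
    nlinarith [mul_nonneg hQ.le (mul_nonneg (by linarith : (0:ℝ) ≤ Real.exp 1) hv0)]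

lemma ptnear (a c : ℝ) (ha : 0 < a) (hc : c = a / (1 + a)) (d : ℕ) (hd1 : 1 ≤ d) (δ u : ℝ)
    (hu0 : 0 ≤ u) (huδ : u ≤ δ) (hδ1 : δ ≤ 1)
    (hδ14 : c * δ ^ 2 / 2 ≤ 1 / 4)
    (hdδ4 : (d : ℝ) * δ ^ 4 ≤ 1) :
    |(1 + a * Real.cos u) ^ d * Real.cos u - (1 + a) ^ d * Real.exp (-((d : ℝ) * c / 2 * u ^ 2))|
      ≤ (1 + a) ^ d * (66 * Real.exp 1 / (c * (d : ℝ))) *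
          Real.exp (-((d : ℝ) * c / 4 * u ^ 2)) := by
  have h1a : (0:ℝ) < 1 + a := by linarith
  have hc0 : 0 < c := by rw [hc]; positivity
  have hc1 : c ≤ 1 := by rw [hc, div_le_one h1a]; linarith
  have hca : c * (1 + a) = a := by rw [hc]; field_simp
  have hd0 : (0:ℝ) < d := by exact_mod_cast Nat.pos_of_ne_zero (by omega)
  set x := c * (1 - Real.cos u) with hxdef
  have hcos1 := Real.cos_le_one u
  have hx0 : 0 ≤ x := mul_nonneg hc0.le (by linarith)
  have hu1 : u ≤ 1 := le_trans huδ hδ1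
  have husq : u ^ 2 ≤ δ ^ 2 := pow_le_pow_left₀ hu0 huδ 2
  have hu4 : u ^ 4 ≤ δ ^ 4 := pow_le_pow_left₀ hu0 huδ 4
  have hcoslb : 1 - u ^ 2 / 2 ≤ Real.cos u := Real.one_sub_sq_div_two_le_cos
  have hxu : x ≤ c * u ^ 2 / 2 := by
    rw [hxdef]
    have h9 : c * (1 - Real.cos u) ≤ c * (u ^ 2 / 2) :=
      mul_le_mul_of_nonneg_left (by linarith) hc0.le
    linarith
  have hx14 : x ≤ 1 / 4 := by
    have h9 : c * u ^ 2 ≤ c * δ ^ 2 := mul_le_mul_of_nonneg_left husq hc0.le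
    linarith
  have hfx : 1 + a * Real.cos u = (1 + a) * (1 - x) := by
    rw [hxdef]; linear_combination (1 - Real.cos u) * hca
  have hfd : (1 + a * Real.cos u) ^ d = (1 + a) ^ d * (1 - x) ^ d := by rw [hfx, mul_pow]
  set b := (d : ℝ) * c / 2 with hbdef
  have hb0 : 0 < b := by positivity
  set E := c * (d : ℝ) * u ^ 4 with hEdef
  have hE0 : 0 ≤ E := by positivity
  have hE1 : E ≤ 1 := by
    have h8 : (d:ℝ) * u ^ 4 ≤ (d:ℝ) * δ ^ 4 := mul_le_mul_of_nonneg_left hu4 hd0.le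
    calc E = c * ((d:ℝ) * u ^ 4) := by rw [hEdef]; ring
      _ ≤ c * 1 := mul_le_mul_of_nonneg_left (le_trans h8 hdδ4) hc0.le
      _ ≤ 1 := by linarith
  have hcb : |Real.cos u - (1 - u ^ 2 / 2)| ≤ |u| ^ 4 * (5 / 96) :=
    Real.cos_bound (by rwa [abs_of_nonneg hu0])
  rw [abs_of_nonneg hu0] at hcb
  have hcbub : Real.cos u ≤ 1 - u ^ 2 / 2 + u ^ 4 * (5 / 96) := by
    have := abs_le.mp hcb; linarith [this.2]
  have hdxub : (d : ℝ) * x ≤ b * u ^ 2 := by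
    have h9 := mul_le_mul_of_nonneg_left hxu hd0.le
    calc (d:ℝ) * x ≤ (d:ℝ) * (c * u ^ 2 / 2) := h9
      _ = b * u ^ 2 := by rw [hbdef]; ring
  have hdxlb : b * u ^ 2 - (5 / 96) * E ≤ (d : ℝ) * x := by
    have h7 : u ^ 2 / 2 - u ^ 4 * (5 / 96) ≤ 1 - Real.cos u := by linarith
    have h9 := mul_le_mul_of_nonneg_left h7 (mul_nonneg hd0.le hc0.le)
    calc b * u ^ 2 - (5/96) * E = (d:ℝ) * c * (u ^ 2 / 2 - u ^ 4 * (5/96)) := by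
          rw [hbdef, hEdef]; ring
      _ ≤ (d:ℝ) * c * (1 - Real.cos u) := h9
      _ = (d:ℝ) * x := by rw [hxdef]; ring
  have hdx2 : (d : ℝ) * x ^ 2 ≤ E / 4 := by
    have h10 : x ^ 2 ≤ (c * u ^ 2 / 2) ^ 2 := pow_le_pow_left₀ hx0 hxu 2
    have h11 : (d:ℝ) * x ^ 2 ≤ (d:ℝ) * (c * u ^ 2 / 2) ^ 2 :=
      mul_le_mul_of_nonneg_left h10 hd0.le
    have h12 : (d:ℝ) * (c * u ^ 2 / 2) ^ 2 = (c * E) / 4 := by rw [hEdef]; ring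
    have h13 : c * E ≤ 1 * E := mul_le_mul_of_nonneg_right hc1 hE0
    linarith
  have hup : (1 - x) ^ d ≤ Real.exp (-(b * u ^ 2)) * Real.exp E := by
    calc (1 - x) ^ d ≤ Real.exp (-x) ^ d :=
          pow_le_pow_left₀ (by linarith) (aux_one_sub_le_exp x) d
      _ = Real.exp (-((d : ℝ) * x)) := by rw [← Real.exp_nat_mul]; congr 1; ring
      _ ≤ Real.exp (-(b * u ^ 2) + E) := by
          apply Real.exp_le_exp.mpr; linarith
      _ = _ := Real.exp_add _ _
  have hlo : Real.exp (-(b * u ^ 2)) * Real.exp (-E) ≤ (1 - x) ^ d := by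
    have hds : (d:ℝ) * (x + x ^ 2) = (d:ℝ) * x + (d:ℝ) * x ^ 2 := by ring
    calc Real.exp (-(b * u ^ 2)) * Real.exp (-E) = Real.exp (-(b * u ^ 2) + -E) :=
          (Real.exp_add _ _).symm
      _ ≤ Real.exp (-((d : ℝ) * (x + x ^ 2))) := by
          apply Real.exp_le_exp.mpr; rw [hds]; linarith
      _ = Real.exp (-(x + x ^ 2)) ^ d := by rw [← Real.exp_nat_mul]; congr 1; ring
      _ ≤ (1 - x) ^ d :=
          pow_le_pow_left₀ (Real.exp_pos _).le (aux_exp_le_one_sub hx0 hx14) d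
  set Q := Real.exp (-(b * u ^ 2)) with hQdef
  have hQ0 : 0 < Q := Real.exp_pos _
  have hu2le1 : u ^ 2 ≤ 1 := pow_le_one₀ hu0 hu1
  have hcos0 : 0 ≤ Real.cos u := by linarith
  have hxd0 : (0:ℝ) ≤ (1 - x) ^ d := pow_nonneg (by linarith) d
  have hmain : |(1 - x) ^ d * Real.cos u - Q| ≤
      Q * (Real.exp 1 * E + Real.exp 1 * (u ^ 2 / 2)) := by
    apply aux_sandwich hQ0 _ _ hcos1 (by linarith) hxd0 hE0 hE1 (by positivity) (by linarith)
    · rw [hQdef]; exact hlo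
    · rw [hQdef]; exact hup
  set Q2 := Real.exp (-((d : ℝ) * c / 4 * u ^ 2)) with hQ2def
  have hQ2pos : 0 < Q2 := Real.exp_pos _
  have hQsplit : Q = Q2 * Q2 := by
    rw [hQdef, hQ2def, ← Real.exp_add]; congr 1; rw [hbdef]; ring
  have hβ : (0:ℝ) < (d : ℝ) * c / 4 := by positivity
  have m4 : u ^ 4 * Q2 ≤ 4 / ((d : ℝ) * c / 4) ^ 2 := aux_mom4 u hβ
  have m2 : u ^ 2 * Q2 ≤ 1 / ((d : ℝ) * c / 4) := aux_mom2 u hβ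
  have hdc0 : (0:ℝ) < (d:ℝ) * c := by positivity
  have m4' : u ^ 4 * Q2 ≤ 64 / ((d : ℝ) * c) ^ 2 := by
    have heq : (4:ℝ) / ((d : ℝ) * c / 4) ^ 2 = 64 / ((d : ℝ) * c) ^ 2 := by
      field_simp; ring
    linarith [m4, heq.le]
  have m2' : u ^ 2 * Q2 ≤ 4 / ((d : ℝ) * c) := by
    have heq : (1:ℝ) / ((d : ℝ) * c / 4) = 4 / ((d : ℝ) * c) := by field_simp
    linarith [m2, heq.le]
  have hbound : Q2 * (Real.exp 1 * E + Real.exp 1 * (u ^ 2 / 2)) ≤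
      66 * Real.exp 1 / (c * (d : ℝ)) := by
    have he0 : (0:ℝ) < Real.exp 1 := Real.exp_pos 1
    have step : Q2 * (Real.exp 1 * E + Real.exp 1 * (u ^ 2 / 2)) =
        Real.exp 1 * (c * (d:ℝ)) * (u ^ 4 * Q2) + (Real.exp 1 / 2) * (u ^ 2 * Q2) := by
      rw [hEdef]; ring
    rw [step]
    have t1 : Real.exp 1 * (c * (d:ℝ)) * (u ^ 4 * Q2) ≤
        Real.exp 1 * (c * (d:ℝ)) * (64 / ((d : ℝ) * c) ^ 2) :=
      mul_le_mul_of_nonneg_left m4' (by positivity)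
    have t2 : (Real.exp 1 / 2) * (u ^ 2 * Q2) ≤ (Real.exp 1 / 2) * (4 / ((d : ℝ) * c)) :=
      mul_le_mul_of_nonneg_left m2' (by positivity)
    have teq : Real.exp 1 * (c * (d:ℝ)) * (64 / ((d : ℝ) * c) ^ 2) +
        (Real.exp 1 / 2) * (4 / ((d : ℝ) * c)) = 66 * Real.exp 1 / (c * (d:ℝ)) := by
      field_simp; ring
    linarith
  have hsplit : (1 + a * Real.cos u) ^ d * Real.cos u - (1 + a) ^ d * Q =
      (1 + a) ^ d * ((1 - x) ^ d * Real.cos u - Q) := by rw [hfd]; ring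
  have hpow0 : (0:ℝ) ≤ (1 + a) ^ d := pow_nonneg h1a.le d
  calc |(1 + a * Real.cos u) ^ d * Real.cos u - (1 + a) ^ d * Q|
      = (1 + a) ^ d * |(1 - x) ^ d * Real.cos u - Q| := by
        rw [hsplit, abs_mul, abs_of_nonneg hpow0]
    _ ≤ (1 + a) ^ d * (Q * (Real.exp 1 * E + Real.exp 1 * (u ^ 2 / 2))) :=
        mul_le_mul_of_nonneg_left hmain hpow0
    _ = (1 + a) ^ d * (Q2 * (Real.exp 1 * E + Real.exp 1 * (u ^ 2 / 2))) * Q2 := by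
        rw [hQsplit]; ring
    _ ≤ (1 + a) ^ d * (66 * Real.exp 1 / (c * (d : ℝ))) * Q2 := by
        apply mul_le_mul_of_nonneg_right _ hQ2pos.le
        exact mul_le_mul_of_nonneg_left hbound hpow0

lemma gauss_pieces (β δ : ℝ) (hβ : 0 < β) (hδ : 0 ≤ δ) :
    (∫ u in (0:ℝ)..δ, Real.exp (-(β * u ^ 2))) ≤ Real.sqrt (π / β) / 2 ∧
    Real.sqrt (π / β) / 2 - (∫ u in (0:ℝ)..δ, Real.exp (-(β * u ^ 2)))
      ≤ Real.exp (-(β / 2 * δ ^ 2)) * (Real.sqrt (π / (β / 2)) / 2) ∧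
    0 ≤ ∫ u in (0:ℝ)..δ, Real.exp (-(β * u ^ 2)) := by
  have hint : Integrable (fun u : ℝ => Real.exp (-(β * u ^ 2))) := by
    simpa [neg_mul] using integrable_exp_neg_mul_sq hβ
  have hint2 : Integrable (fun u : ℝ => Real.exp (-(β / 2 * u ^ 2))) := by
    simpa [neg_mul] using integrable_exp_neg_mul_sq (by linarith : 0 < β / 2)
  have hIoi : ∫ u in Ioi (0:ℝ), Real.exp (-(β * u ^ 2)) = Real.sqrt (π / β) / 2 := by
    simpa [neg_mul] using integral_gaussian_Ioi β
  have hIoi2 : ∫ u in Ioi (0:ℝ), Real.exp (-(β / 2 * u ^ 2)) =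
      Real.sqrt (π / (β / 2)) / 2 := by
    simpa [neg_mul] using integral_gaussian_Ioi (β / 2)
  have hioc : (∫ u in (0:ℝ)..δ, Real.exp (-(β * u ^ 2))) =
      ∫ u in Ioc (0:ℝ) δ, Real.exp (-(β * u ^ 2)) :=
    intervalIntegral.integral_of_le hδ
  have hsplit : (∫ u in Ioi (0:ℝ), Real.exp (-(β * u ^ 2))) =
      (∫ u in Ioc (0:ℝ) δ, Real.exp (-(β * u ^ 2))) +
        ∫ u in Ioi δ, Real.exp (-(β * u ^ 2)) := by
    rw [← MeasureTheory.setIntegral_union (Ioc_disjoint_Ioi le_rfl) measurableSet_Ioi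
      hint.integrableOn hint.integrableOn, Set.Ioc_union_Ioi_eq_Ioi hδ]
  have htail_nonneg : 0 ≤ ∫ u in Ioi δ, Real.exp (-(β * u ^ 2)) :=
    setIntegral_nonneg measurableSet_Ioi fun x _ => (Real.exp_pos _).le
  have htail : (∫ u in Ioi δ, Real.exp (-(β * u ^ 2))) ≤
      Real.exp (-(β / 2 * δ ^ 2)) * (Real.sqrt (π / (β / 2)) / 2) := by
    have hpt : ∀ u ∈ Ioi δ, Real.exp (-(β * u ^ 2)) ≤
        Real.exp (-(β / 2 * δ ^ 2)) * Real.exp (-(β / 2 * u ^ 2)) := by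
      intro u hu
      rw [← Real.exp_add]
      apply Real.exp_le_exp.mpr
      have : δ ^ 2 ≤ u ^ 2 := pow_le_pow_left₀ hδ (le_of_lt hu) 2
      nlinarith
    calc (∫ u in Ioi δ, Real.exp (-(β * u ^ 2)))
        ≤ ∫ u in Ioi δ, Real.exp (-(β / 2 * δ ^ 2)) * Real.exp (-(β / 2 * u ^ 2)) := by
          apply setIntegral_mono_on hint.integrableOn
            (hint2.integrableOn.const_mul _) measurableSet_Ioi hpt
      _ = Real.exp (-(β / 2 * δ ^ 2)) * ∫ u in Ioi δ, Real.exp (-(β / 2 * u ^ 2)) := by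
          rw [MeasureTheory.integral_const_mul]
      _ ≤ Real.exp (-(β / 2 * δ ^ 2)) * ∫ u in Ioi (0:ℝ), Real.exp (-(β / 2 * u ^ 2)) := by
          apply mul_le_mul_of_nonneg_left _ (Real.exp_pos _).le
          apply setIntegral_mono_set hint2.integrableOn
            (Filter.Eventually.of_forall fun x => (Real.exp_pos _).le)
            (HasSubset.Subset.eventuallyLE (Ioi_subset_Ioi hδ))
      _ = _ := by rw [hIoi2]
  refine ⟨?_, ?_, ?_⟩
  · rw [hioc, ← hIoi, hsplit]; linarith
  · rw [hioc]; rw [hsplit] at hIoi; linarith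
  · rw [hioc]
    exact setIntegral_nonneg measurableSet_Ioc fun x _ => (Real.exp_pos _).le

lemma ptfar (a c : ℝ) (ha : 0 < a) (hc : c = a / (1 + a)) (d : ℕ) (δ u : ℝ)
    (hδ0 : 0 < δ) (hδ1 : δ ≤ 1) (hδu : δ ≤ u) (huπ : u ≤ π)
    (hacos : a * (1 - Real.cos δ) ≤ 2) :
    |(1 + a * Real.cos u) ^ d * Real.cos u| ≤
      (1 + a) ^ d * Real.exp (-(2 / π ^ 2 * (c * (d:ℝ) * δ ^ 2))) := by
  have h1a : (0:ℝ) < 1 + a := by linarith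
  have hc0 : 0 < c := by rw [hc]; positivity
  have hca : c * (1 + a) = a := by rw [hc]; field_simp
  have hδsq : δ ^ 2 ≤ 1 := pow_le_one₀ hδ0.le hδ1
  have hcosδ : 1 - δ ^ 2 / 2 ≤ Real.cos δ := Real.one_sub_sq_div_two_le_cos
  have hρ0 : (0:ℝ) ≤ 1 + a * Real.cos δ := by nlinarith
  have hcosu : Real.cos u ≤ Real.cos δ :=
    Real.cos_le_cos_of_nonneg_of_le_pi hδ0.le huπ hδu
  have hcosm1 := Real.neg_one_le_cos u
  have hρ : |1 + a * Real.cos u| ≤ 1 + a * Real.cos δ := by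
    rw [abs_le]; constructor <;> nlinarith
  have hcosq : Real.cos δ ≤ 1 - 2 / π ^ 2 * δ ^ 2 := by
    apply Real.cos_le_one_sub_mul_cos_sq
    rw [abs_of_nonneg hδ0.le]; linarith [Real.pi_gt_three]
  have hρe : 1 + a * Real.cos δ ≤ (1 + a) * Real.exp (-(c * (1 - Real.cos δ))) := by
    have heq : 1 + a * Real.cos δ = (1 + a) * (1 - c * (1 - Real.cos δ)) := by
      linear_combination (1 - Real.cos δ) * hca
    rw [heq]
    exact mul_le_mul_of_nonneg_left (aux_one_sub_le_exp _) h1a.le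
  have hρe2 : (1 + a) * Real.exp (-(c * (1 - Real.cos δ))) ≤
      (1 + a) * Real.exp (-(2 / π ^ 2 * (c * δ ^ 2))) := by
    apply mul_le_mul_of_nonneg_left _ h1a.le
    apply Real.exp_le_exp.mpr
    have hπ : (0:ℝ) < π ^ 2 := by positivity
    have h2 : 2 / π ^ 2 * δ ^ 2 ≤ 1 - Real.cos δ := by linarith
    have := mul_le_mul_of_nonneg_left h2 hc0.le
    nlinarith
  have habs : |(1 + a * Real.cos u) ^ d * Real.cos u| ≤ |1 + a * Real.cos u| ^ d := by
    rw [abs_mul, abs_pow]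
    calc |1 + a * Real.cos u| ^ d * |Real.cos u| ≤ |1 + a * Real.cos u| ^ d * 1 :=
          mul_le_mul_of_nonneg_left (Real.abs_cos_le_one u) (pow_nonneg (abs_nonneg _) d)
      _ = _ := mul_one _
  calc |(1 + a * Real.cos u) ^ d * Real.cos u| ≤ |1 + a * Real.cos u| ^ d := habs
    _ ≤ (1 + a * Real.cos δ) ^ d := pow_le_pow_left₀ (abs_nonneg _) hρ d
    _ ≤ ((1 + a) * Real.exp (-(2 / π ^ 2 * (c * δ ^ 2)))) ^ d :=
        pow_le_pow_left₀ hρ0 (le_trans hρe hρe2) d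
    _ = (1 + a) ^ d * Real.exp (-(2 / π ^ 2 * (c * δ ^ 2))) ^ d := mul_pow _ _ _
    _ = (1 + a) ^ d * Real.exp (-(2 / π ^ 2 * (c * (d:ℝ) * δ ^ 2))) := by
        rw [← Real.exp_nat_mul]
        congr 2
        ring

lemma core (a c : ℝ) (ha : 0 < a) (hc : c = a / (1 + a)) (d : ℕ) (hd1 : 1 ≤ d) (δ : ℝ)
    (hδ0 : 0 < δ) (hδ1 : δ ≤ 1)
    (hδ14 : c * δ ^ 2 / 2 ≤ 1 / 4)
    (hdδ4 : (d : ℝ) * δ ^ 4 ≤ 1)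
    (hacos : a * (1 - Real.cos δ) ≤ 2) :
    |(∫ u in (0:ℝ)..π, (1 + a * Real.cos u) ^ d * Real.cos u)
        - (1 + a) ^ d * (Real.sqrt (π / ((d:ℝ) * c / 2)) / 2)|
      ≤ (1 + a) ^ d * ((66 * Real.exp 1 / (c * (d : ℝ))) * (Real.sqrt (π / ((d:ℝ) * c / 4)) / 2)
          + Real.exp (-((d:ℝ) * c / 4 * δ ^ 2)) * (Real.sqrt (π / ((d:ℝ) * c / 4)) / 2)
          + π * Real.exp (-(2 / π ^ 2 * (c * (d:ℝ) * δ ^ 2)))) := by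
  have h1a : (0:ℝ) < 1 + a := by linarith
  have hc0 : 0 < c := by rw [hc]; positivity
  have hd0 : (0:ℝ) < d := by exact_mod_cast Nat.pos_of_ne_zero (by omega)
  have hb2 : (0:ℝ) < (d:ℝ) * c / 2 := by positivity
  have hb4 : (0:ℝ) < (d:ℝ) * c / 4 := by positivity
  have hδπ : δ ≤ π := le_trans hδ1 (by linarith [Real.pi_gt_three])
  -- continuity
  have hgc : Continuous (fun u : ℝ => (1 + a * Real.cos u) ^ d * Real.cos u) :=
    ((continuous_const.add (continuous_const.mul Real.continuous_cos)).pow d).mul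
      Real.continuous_cos
  have hPc : Continuous (fun u : ℝ => (1 + a) ^ d * Real.exp (-((d:ℝ) * c / 2 * u ^ 2))) :=
    continuous_const.mul (Real.continuous_exp.comp (continuous_const.mul (continuous_pow 2)).neg)
  have hBc : Continuous (fun u : ℝ =>
      (1 + a) ^ d * (66 * Real.exp 1 / (c * (d : ℝ))) * Real.exp (-((d:ℝ) * c / 4 * u ^ 2))) :=
    continuous_const.mul (Real.continuous_exp.comp (continuous_const.mul (continuous_pow 2)).neg)
  -- split
  have hsplit : (∫ u in (0:ℝ)..π, (1 + a * Real.cos u) ^ d * Real.cos u)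
      = (∫ u in (0:ℝ)..δ, (1 + a * Real.cos u) ^ d * Real.cos u)
        + ∫ u in δ..π, (1 + a * Real.cos u) ^ d * Real.cos u :=
    (integral_add_adjacent_intervals (hgc.intervalIntegrable _ _)
      (hgc.intervalIntegrable _ _)).symm
  -- near estimate
  have hnear : |(∫ u in (0:ℝ)..δ, (1 + a * Real.cos u) ^ d * Real.cos u)
      - ∫ u in (0:ℝ)..δ, (1 + a) ^ d * Real.exp (-((d:ℝ) * c / 2 * u ^ 2))|
      ≤ (1 + a) ^ d * ((66 * Real.exp 1 / (c * (d : ℝ)))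
          * (Real.sqrt (π / ((d:ℝ) * c / 4)) / 2)) := by
    rw [← intervalIntegral.integral_sub (hgc.intervalIntegrable _ _)
      (hPc.intervalIntegrable _ _)]
    calc |∫ u in (0:ℝ)..δ, ((1 + a * Real.cos u) ^ d * Real.cos u
            - (1 + a) ^ d * Real.exp (-((d:ℝ) * c / 2 * u ^ 2)))|
        ≤ ∫ u in (0:ℝ)..δ, |(1 + a * Real.cos u) ^ d * Real.cos u
            - (1 + a) ^ d * Real.exp (-((d:ℝ) * c / 2 * u ^ 2))| :=
          intervalIntegral.abs_integral_le_integral_abs hδ0.le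
      _ ≤ ∫ u in (0:ℝ)..δ, (1 + a) ^ d * (66 * Real.exp 1 / (c * (d : ℝ)))
            * Real.exp (-((d:ℝ) * c / 4 * u ^ 2)) := by
          apply intervalIntegral.integral_mono_on hδ0.le
            ((hgc.sub hPc).abs.intervalIntegrable _ _) (hBc.intervalIntegrable _ _)
          intro u hu
          exact ptnear a c ha hc d hd1 δ u hu.1 hu.2 hδ1 hδ14 hdδ4
      _ = (1 + a) ^ d * (66 * Real.exp 1 / (c * (d : ℝ)))
            * ∫ u in (0:ℝ)..δ, Real.exp (-((d:ℝ) * c / 4 * u ^ 2)) := by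
          rw [intervalIntegral.integral_const_mul]
      _ ≤ (1 + a) ^ d * ((66 * Real.exp 1 / (c * (d : ℝ)))
            * (Real.sqrt (π / ((d:ℝ) * c / 4)) / 2)) := by
          rw [← mul_assoc]
          exact mul_le_mul_of_nonneg_left (gauss_pieces _ δ hb4 hδ0.le).1 (by positivity)
  -- gaussian tail for the main term
  have hPint : (∫ u in (0:ℝ)..δ, (1 + a) ^ d * Real.exp (-((d:ℝ) * c / 2 * u ^ 2)))
      = (1 + a) ^ d * ∫ u in (0:ℝ)..δ, Real.exp (-((d:ℝ) * c / 2 * u ^ 2)) :=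
    intervalIntegral.integral_const_mul _ _
  have htail : |(∫ u in (0:ℝ)..δ, (1 + a) ^ d * Real.exp (-((d:ℝ) * c / 2 * u ^ 2)))
      - (1 + a) ^ d * (Real.sqrt (π / ((d:ℝ) * c / 2)) / 2)|
      ≤ (1 + a) ^ d * (Real.exp (-((d:ℝ) * c / 4 * δ ^ 2))
          * (Real.sqrt (π / ((d:ℝ) * c / 4)) / 2)) := by
    obtain ⟨hg1, hg2, _⟩ := gauss_pieces ((d:ℝ) * c / 2) δ hb2 hδ0.le
    have e1 : (d:ℝ) * c / 2 / 2 = (d:ℝ) * c / 4 := by ring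
    rw [e1] at hg2
    rw [hPint, ← mul_sub, abs_mul, abs_of_nonneg (pow_nonneg h1a.le d)]
    apply mul_le_mul_of_nonneg_left _ (pow_nonneg h1a.le d)
    rw [abs_le]; constructor
    · have := (Real.exp_pos (-((d:ℝ) * c / 4 * δ ^ 2))).le
      have hs : (0:ℝ) ≤ Real.sqrt (π / ((d:ℝ) * c / 4)) / 2 := by positivity
      nlinarith
    · linarith
  -- far estimate
  have hfar : |∫ u in δ..π, (1 + a * Real.cos u) ^ d * Real.cos u|
      ≤ (1 + a) ^ d * (π * Real.exp (-(2 / π ^ 2 * (c * (d:ℝ) * δ ^ 2)))) := by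
    have hb := intervalIntegral.norm_integral_le_of_norm_le_const
      (C := (1 + a) ^ d * Real.exp (-(2 / π ^ 2 * (c * (d:ℝ) * δ ^ 2))))
      (f := fun u : ℝ => (1 + a * Real.cos u) ^ d * Real.cos u) (a := δ) (b := π) ?_
    · rw [Real.norm_eq_abs] at hb
      calc |∫ u in δ..π, (1 + a * Real.cos u) ^ d * Real.cos u|
          ≤ (1 + a) ^ d * Real.exp (-(2 / π ^ 2 * (c * (d:ℝ) * δ ^ 2))) * |π - δ| := hb
        _ ≤ (1 + a) ^ d * Real.exp (-(2 / π ^ 2 * (c * (d:ℝ) * δ ^ 2))) * π := by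
            apply mul_le_mul_of_nonneg_left _ (by positivity)
            rw [abs_of_nonneg (by linarith)]
            linarith
        _ = (1 + a) ^ d * (π * Real.exp (-(2 / π ^ 2 * (c * (d:ℝ) * δ ^ 2)))) := by ring
    · intro u hu
      rw [Set.uIoc_of_le hδπ] at hu
      rw [Real.norm_eq_abs]
      exact ptfar a c ha hc d δ u hδ0 hδ1 hu.1.le hu.2 hacos
  -- combine
  have habs : ∀ x y z w : ℝ, |x - y| = |(x - z) + (z - w) + (w - y)| := by
    intro x y z w; congr 1; ring
  rw [hsplit]
  set A := ∫ u in (0:ℝ)..δ, (1 + a * Real.cos u) ^ d * Real.cos u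
  set F := ∫ u in δ..π, (1 + a * Real.cos u) ^ d * Real.cos u
  set P := ∫ u in (0:ℝ)..δ, (1 + a) ^ d * Real.exp (-((d:ℝ) * c / 2 * u ^ 2))
  set M := (1 + a) ^ d * (Real.sqrt (π / ((d:ℝ) * c / 2)) / 2)
  have hdecomp : A + F - M = (A - P) + (P - M) + F := by ring
  rw [hdecomp]
  calc |(A - P) + (P - M) + F| ≤ |(A - P) + (P - M)| + |F| := abs_add_le _ _
    _ ≤ |A - P| + |P - M| + |F| := by linarith [abs_add_le (A - P) (P - M)]
    _ ≤ _ := by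
        have := hnear; have := htail; have := hfar
        rw [mul_add, mul_add]
        linarith

lemma sqrt_tendsto_atTop : Tendsto (fun d : ℕ => Real.sqrt d) atTop atTop := by
  have h1 : Tendsto (fun x : ℝ => x ^ (1/(2:ℝ))) atTop atTop :=
    tendsto_rpow_atTop (by norm_num)
  have h2 : Tendsto Real.sqrt atTop atTop := by
    apply h1.congr'
    filter_upwards [eventually_ge_atTop (0:ℝ)] with x hx
    rw [Real.sqrt_eq_rpow]
  exact h2.comp tendsto_natCast_atTop_atTop

lemma key (a c : ℝ) (ha : 0 < a) (hc : c = a / (1 + a)) :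
    ∀ᶠ d : ℕ in atTop,
      |(2 * a * ∫ u in (0:ℝ)..π, (1 + a * Real.cos u) ^ d * Real.cos u) /
          ((1 + a) ^ d * Real.sqrt (2 * π * a * (1 + a) / d)) - 1|
        ≤ (100 * Real.exp 1 * (1 + a) / a + 1) / d := by
  have h1a : (0:ℝ) < 1 + a := by linarith
  have hc0 : 0 < c := by rw [hc]; positivity
  have hc1 : c ≤ 1 := by rw [hc, div_le_one h1a]; linarith
  have hca : c * (1 + a) = a := by rw [hc]; field_simp
  have hc5 : (0:ℝ) < c / 5 := by positivity
  have hT : Tendsto (fun d : ℕ => (d:ℝ) * (Real.sqrt 2 + 3 * (d:ℝ)) *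
      Real.exp (-(c / 5 * Real.sqrt d))) atTop (nhds 0) := by
    have T2 := tendsto_rpow_mul_exp_neg_mul_atTop_nhds_zero 2 (c/5) hc5
    have T4 := tendsto_rpow_mul_exp_neg_mul_atTop_nhds_zero 4 (c/5) hc5
    have Tg : Tendsto (fun x : ℝ => Real.sqrt 2 * (x ^ (2:ℝ) * Real.exp (-(c/5) * x))
        + 3 * (x ^ (4:ℝ) * Real.exp (-(c/5) * x))) atTop (nhds 0) := by
      have := (T2.const_mul (Real.sqrt 2)).add (T4.const_mul 3)
      simpa using this
    have Tcomp := Tg.comp sqrt_tendsto_atTop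
    apply Tcomp.congr'
    filter_upwards [eventually_ge_atTop 1] with d hd
    have hd0 : (0:ℝ) ≤ (d:ℝ) := by positivity
    have hsq : Real.sqrt d ^ 2 = (d:ℝ) := Real.sq_sqrt hd0
    have h2 : Real.sqrt (d:ℝ) ^ ((2:ℕ):ℝ) = (d:ℝ) := by rw [Real.rpow_natCast, hsq]
    have h4 : Real.sqrt (d:ℝ) ^ ((4:ℕ):ℝ) = (d:ℝ) ^ 2 := by
      rw [Real.rpow_natCast, show (Real.sqrt (d:ℝ)) ^ (4:ℕ) = (Real.sqrt (d:ℝ) ^ 2) ^ 2 by ring,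
        hsq]
    simp only [Function.comp_apply]
    rw [show (2:ℝ) = ((2:ℕ):ℝ) by norm_num, show (4:ℝ) = ((4:ℕ):ℝ) by norm_num, h2, h4,
      show -(c/5) * Real.sqrt (d:ℝ) = -(c / 5 * Real.sqrt (d:ℝ)) by ring]
    ring
  have hEv := hT.eventually_le_const (by norm_num : (0:ℝ) < 1)
  filter_upwards [hEv, eventually_ge_atTop 1,
    sqrt_tendsto_atTop.eventually_ge_atTop (2*c),
    sqrt_tendsto_atTop.eventually_ge_atTop (a/4)] with d hEd hd1 hsqc hsqa
  have hd0 : (0:ℝ) < (d:ℝ) := by exact_mod_cast Nat.pos_of_ne_zero (by omega)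
  have hsd0 : 0 < Real.sqrt (d:ℝ) := Real.sqrt_pos.mpr hd0
  have hssd0 : 0 < Real.sqrt (Real.sqrt (d:ℝ)) := Real.sqrt_pos.mpr hsd0
  have hsd1 : 1 ≤ Real.sqrt (d:ℝ) := by
    rw [show (1:ℝ) = Real.sqrt 1 by simp]
    exact Real.sqrt_le_sqrt (by exact_mod_cast hd1)
  have hssd1 : 1 ≤ Real.sqrt (Real.sqrt (d:ℝ)) := by
    rw [show (1:ℝ) = Real.sqrt 1 by simp]
    exact Real.sqrt_le_sqrt hsd1
  set δ : ℝ := (Real.sqrt (Real.sqrt (d:ℝ)))⁻¹ with hδdef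
  have hδ0 : 0 < δ := inv_pos.mpr hssd0
  have hδ1 : δ ≤ 1 := by
    rw [hδdef]; exact inv_le_one_of_one_le₀ hssd1
  have hδsq : δ ^ 2 = (Real.sqrt (d:ℝ))⁻¹ := by
    rw [hδdef, inv_pow, Real.sq_sqrt hsd0.le]
  have hδ4 : δ ^ 4 = (d:ℝ)⁻¹ := by
    rw [show δ ^ 4 = (δ ^ 2) ^ 2 by ring, hδsq, inv_pow, Real.sq_sqrt hd0.le]
  have hdδ4 : (d:ℝ) * δ ^ 4 ≤ 1 := by rw [hδ4, mul_inv_cancel₀ hd0.ne']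
  have hdδsq : (d:ℝ) * δ ^ 2 = Real.sqrt (d:ℝ) := by
    rw [hδsq, mul_inv_eq_iff_eq_mul₀ hsd0.ne']
    exact (Real.mul_self_sqrt hd0.le).symm
  have hδ14 : c * δ ^ 2 / 2 ≤ 1 / 4 := by
    rw [hδsq]
    have h1 : c * (Real.sqrt (d:ℝ))⁻¹ ≤ 1 / 2 := by
      rw [mul_inv_le_iff₀ hsd0]; linarith
    linarith
  have hacos : a * (1 - Real.cos δ) ≤ 2 := by
    have h1 : 1 - Real.cos δ ≤ δ ^ 2 / 2 := by
      linarith [Real.one_sub_sq_div_two_le_cos (x := δ)]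
    have h2 : a * (1 - Real.cos δ) ≤ a * (δ ^ 2 / 2) :=
      mul_le_mul_of_nonneg_left h1 ha.le
    have h3 : a * (Real.sqrt (d:ℝ))⁻¹ ≤ 4 := by
      rw [mul_inv_le_iff₀ hsd0]; linarith
    rw [hδsq] at h2; linarith
  have hcore := core a c ha hc d hd1 δ hδ0 hδ1 hδ14 hdδ4 hacos
  clear_value δ
  -- notation
  obtain ⟨G, hGdef⟩ : ∃ G : ℝ, G = ∫ u in (0:ℝ)..π, (1 + a * Real.cos u) ^ d * Real.cos u :=
    ⟨_, rfl⟩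
  rw [← hGdef] at hcore ⊢
  set L2 : ℝ := Real.sqrt (π / ((d:ℝ) * c / 2)) / 2 with hL2def
  set L4 : ℝ := Real.sqrt (π / ((d:ℝ) * c / 4)) / 2 with hL4def
  have hb2 : (0:ℝ) < (d:ℝ) * c / 2 := by positivity
  have hb4 : (0:ℝ) < (d:ℝ) * c / 4 := by positivity
  have hL2pos : 0 < L2 := by
    rw [hL2def]
    have := Real.sqrt_pos.mpr (div_pos Real.pi_pos hb2)
    linarith
  have hL4pos : 0 < L4 := by
    rw [hL4def]
    have := Real.sqrt_pos.mpr (div_pos Real.pi_pos hb4)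
    linarith
  clear_value L2 L4
  have hL42 : L4 = Real.sqrt 2 * L2 := by
    rw [hL4def, hL2def]
    have harg : π / ((d:ℝ) * c / 4) = 2 * (π / ((d:ℝ) * c / 2)) := by
      field_simp; ring
    rw [harg, Real.sqrt_mul (by norm_num : (0:ℝ) ≤ 2)]
    ring
  have hden_eq : Real.sqrt (2 * π * a * (1 + a) / (d:ℝ)) = 2 * a * L2 := by
    have ha2 : a ^ 2 = c * (1 + a) * a := by rw [hca]; ring
    have harg : 2 * π * a * (1 + a) / (d:ℝ) = a ^ 2 * (π / ((d:ℝ) * c / 2)) := by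
      rw [ha2]; field_simp
    rw [harg, Real.sqrt_mul (sq_nonneg a), Real.sqrt_sq ha.le, hL2def]; ring
  have hp0 : (0:ℝ) < (1 + a) ^ d := pow_pos h1a d
  have hane : a ≠ 0 := ha.ne'
  have hpne : ((1 + a):ℝ) ^ d ≠ 0 := hp0.ne'
  have hL2ne : L2 ≠ 0 := hL2pos.ne'
  have hratio : (2 * a * G) / ((1 + a) ^ d * Real.sqrt (2 * π * a * (1 + a) / (d:ℝ))) - 1
      = (G - (1 + a) ^ d * L2) / ((1 + a) ^ d * L2) := by
    rw [hden_eq]; field_simp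
  set ε := Real.exp (-(c / 5 * Real.sqrt (d:ℝ))) with hεdef
  have hεpos : 0 < ε := by rw [hεdef]; exact Real.exp_pos _
  clear_value ε
  have hε4 : Real.exp (-((d:ℝ) * c / 4 * δ ^ 2)) ≤ ε := by
    rw [hεdef]
    apply Real.exp_le_exp.mpr
    rw [show (d:ℝ) * c / 4 * δ ^ 2 = c / 4 * ((d:ℝ) * δ ^ 2) by ring, hdδsq]
    nlinarith [mul_nonneg hc0.le hsd0.le]
  have hε2 : Real.exp (-(2 / π ^ 2 * (c * (d:ℝ) * δ ^ 2))) ≤ ε := by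
    rw [hεdef]
    apply Real.exp_le_exp.mpr
    rw [show c * (d:ℝ) * δ ^ 2 = c * ((d:ℝ) * δ ^ 2) by ring, hdδsq]
    have hπ2 : π ^ 2 ≤ 10 := by nlinarith [Real.pi_lt_d2, Real.pi_gt_three]
    have hπ2' : (0:ℝ) < π ^ 2 := by positivity
    have hcs : (0:ℝ) ≤ c * Real.sqrt (d:ℝ) := mul_nonneg hc0.le hsd0.le
    have h25 : (1:ℝ)/5 ≤ 2 / π ^ 2 := by
      rw [div_le_div_iff₀ (by norm_num) hπ2']; linarith
    have hkey2 : c / 5 * Real.sqrt (d:ℝ) ≤ 2 / π ^ 2 * (c * Real.sqrt (d:ℝ)) := by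
      calc c / 5 * Real.sqrt (d:ℝ) = (1/5) * (c * Real.sqrt (d:ℝ)) := by ring
        _ ≤ 2 / π ^ 2 * (c * Real.sqrt (d:ℝ)) := mul_le_mul_of_nonneg_right h25 hcs
    linarith
  have hπL2 : π ≤ 3 * Real.sqrt (d:ℝ) * L2 := by
    have h1 : Real.sqrt (d:ℝ) * Real.sqrt (π / ((d:ℝ) * c / 2)) =
        Real.sqrt ((d:ℝ) * (π / ((d:ℝ) * c / 2))) := (Real.sqrt_mul hd0.le _).symm
    have harg : (d:ℝ) * (π / ((d:ℝ) * c / 2)) = 2 * π / c := by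
      field_simp
    have h2 : (2.4:ℝ) ≤ Real.sqrt (2 * π / c) := by
      have hge : (2.4:ℝ) ^ 2 ≤ 2 * π / c := by
        have hdiv : 2 * π ≤ 2 * π / c := by
          rw [le_div_iff₀ hc0]
          nlinarith [Real.pi_gt_three]
        nlinarith [Real.pi_gt_three]
      calc (2.4:ℝ) = Real.sqrt (2.4 ^ 2) := by
            rw [Real.sqrt_sq (by norm_num)]
        _ ≤ _ := Real.sqrt_le_sqrt hge
    have h3 : 3 * Real.sqrt (d:ℝ) * L2 = (3/2) * Real.sqrt (2 * π / c) := by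
      rw [hL2def, show 3 * Real.sqrt (d:ℝ) * (Real.sqrt (π / ((d:ℝ) * c / 2)) / 2)
        = (3/2) * (Real.sqrt (d:ℝ) * Real.sqrt (π / ((d:ℝ) * c / 2))) by ring, h1, harg]
    rw [h3]
    nlinarith [Real.pi_lt_d2]
  have hd1' : (1:ℝ) ≤ (d:ℝ) := by exact_mod_cast hd1
  have hsqd_le : Real.sqrt (d:ℝ) ≤ (d:ℝ) := by
    calc Real.sqrt (d:ℝ) ≤ Real.sqrt ((d:ℝ) ^ 2) :=
          Real.sqrt_le_sqrt (le_self_pow₀ hd1' (by norm_num))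
      _ = (d:ℝ) := Real.sqrt_sq hd0.le
  have hsqrt2 : Real.sqrt 2 ≤ 1.42 := by
    calc Real.sqrt 2 ≤ Real.sqrt (1.42 ^ 2) := Real.sqrt_le_sqrt (by norm_num)
      _ = 1.42 := Real.sqrt_sq (by norm_num)
  have hsqrt2nn : (0:ℝ) ≤ Real.sqrt 2 := Real.sqrt_nonneg 2
  have he0 : (0:ℝ) < Real.exp 1 := Real.exp_pos 1
  have hEd' : (Real.sqrt 2 + 3 * (d:ℝ)) * ε ≤ 1 / (d:ℝ) := by
    rw [le_div_iff₀ hd0]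
    calc (Real.sqrt 2 + 3 * (d:ℝ)) * ε * (d:ℝ)
        = (d:ℝ) * (Real.sqrt 2 + 3 * (d:ℝ)) * ε := by ring
      _ ≤ 1 := hEd
  have t1 : (66 * Real.exp 1 / (c * (d:ℝ))) * L4 ≤
      L2 * (94 * Real.exp 1 * (1 + a) / (a * (d:ℝ))) := by
    rw [hL42]
    have heq : Real.exp 1 / (c * (d:ℝ)) = Real.exp 1 * (1 + a) / (a * (d:ℝ)) := by
      rw [hc]; field_simp
    have hpos : 0 < Real.exp 1 / (c * (d:ℝ)) := by positivity
    have hcd : 66 * Real.exp 1 / (c * (d:ℝ)) * Real.sqrt 2 ≤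
        94 * Real.exp 1 * (1 + a) / (a * (d:ℝ)) := by
      calc 66 * Real.exp 1 / (c * (d:ℝ)) * Real.sqrt 2
          = (66 * Real.sqrt 2) * (Real.exp 1 / (c * (d:ℝ))) := by ring
        _ ≤ 94 * (Real.exp 1 / (c * (d:ℝ))) := by
            have h66 : 66 * Real.sqrt 2 ≤ 94 := by
              have := mul_le_mul_of_nonneg_left hsqrt2 (show (0:ℝ) ≤ 66 by norm_num)
              linarith
            exact mul_le_mul_of_nonneg_right h66 hpos.le
        _ = 94 * Real.exp 1 * (1 + a) / (a * (d:ℝ)) := by rw [heq]; ring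
    calc 66 * Real.exp 1 / (c * (d:ℝ)) * (Real.sqrt 2 * L2)
        = (66 * Real.exp 1 / (c * (d:ℝ)) * Real.sqrt 2) * L2 := by ring
      _ ≤ (94 * Real.exp 1 * (1 + a) / (a * (d:ℝ))) * L2 :=
          mul_le_mul_of_nonneg_right hcd hL2pos.le
      _ = L2 * (94 * Real.exp 1 * (1 + a) / (a * (d:ℝ))) := by ring
  have t2 : Real.exp (-((d:ℝ) * c / 4 * δ ^ 2)) * L4 ≤ L2 * (Real.sqrt 2 * ε) := by
    rw [hL42]
    calc Real.exp (-((d:ℝ) * c / 4 * δ ^ 2)) * (Real.sqrt 2 * L2)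
        ≤ ε * (Real.sqrt 2 * L2) :=
          mul_le_mul_of_nonneg_right hε4 (by positivity)
      _ = L2 * (Real.sqrt 2 * ε) := by ring
  have t3 : π * Real.exp (-(2 / π ^ 2 * (c * (d:ℝ) * δ ^ 2))) ≤
      L2 * (3 * Real.sqrt (d:ℝ) * ε) := by
    calc π * Real.exp (-(2 / π ^ 2 * (c * (d:ℝ) * δ ^ 2)))
        ≤ (3 * Real.sqrt (d:ℝ) * L2) * Real.exp (-(2 / π ^ 2 * (c * (d:ℝ) * δ ^ 2))) :=
          mul_le_mul_of_nonneg_right hπL2 (Real.exp_pos _).le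
      _ ≤ (3 * Real.sqrt (d:ℝ) * L2) * ε :=
          mul_le_mul_of_nonneg_left hε2 (by positivity)
      _ = L2 * (3 * Real.sqrt (d:ℝ) * ε) := by ring
  have hsum : Real.sqrt 2 * ε + 3 * Real.sqrt (d:ℝ) * ε ≤ 1 / (d:ℝ) := by
    have h1 : 3 * Real.sqrt (d:ℝ) * ε ≤ 3 * (d:ℝ) * ε := by
      apply mul_le_mul_of_nonneg_right _ hεpos.le
      linarith
    have hexp : (Real.sqrt 2 + 3 * (d:ℝ)) * ε = Real.sqrt 2 * ε + 3 * (d:ℝ) * ε := by ring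
    linarith [hEd', h1]
  have hfinal_coef : 94 * Real.exp 1 * (1 + a) / (a * (d:ℝ)) + 1 / (d:ℝ)
      ≤ (100 * Real.exp 1 * (1 + a) / a + 1) / (d:ℝ) := by
    have hEa : (0:ℝ) < Real.exp 1 * (1 + a) / a := by positivity
    have e1 : 94 * Real.exp 1 * (1 + a) / (a * (d:ℝ)) + 1 / (d:ℝ)
        = (94 * (Real.exp 1 * (1 + a) / a) + 1) / (d:ℝ) := by
      field_simp
    have e2 : (100 * Real.exp 1 * (1 + a) / a + 1) / (d:ℝ)
        = (100 * (Real.exp 1 * (1 + a) / a) + 1) / (d:ℝ) := by ring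
    rw [e1, e2]
    gcongr
    linarith
  have hRle : (66 * Real.exp 1 / (c * (d:ℝ))) * L4
      + Real.exp (-((d:ℝ) * c / 4 * δ ^ 2)) * L4
      + π * Real.exp (-(2 / π ^ 2 * (c * (d:ℝ) * δ ^ 2)))
      ≤ L2 * ((100 * Real.exp 1 * (1 + a) / a + 1) / (d:ℝ)) := by
    have step : (66 * Real.exp 1 / (c * (d:ℝ))) * L4
        + Real.exp (-((d:ℝ) * c / 4 * δ ^ 2)) * L4
        + π * Real.exp (-(2 / π ^ 2 * (c * (d:ℝ) * δ ^ 2)))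
        ≤ L2 * (94 * Real.exp 1 * (1 + a) / (a * (d:ℝ)) + 1 / (d:ℝ)) := by
      have hmul := mul_le_mul_of_nonneg_left hsum hL2pos.le
      have hdist : L2 * (Real.sqrt 2 * ε + 3 * Real.sqrt (d:ℝ) * ε)
          = L2 * (Real.sqrt 2 * ε) + L2 * (3 * Real.sqrt (d:ℝ) * ε) := by ring
      have hdist2 : L2 * (94 * Real.exp 1 * (1 + a) / (a * (d:ℝ)) + 1 / (d:ℝ))
          = L2 * (94 * Real.exp 1 * (1 + a) / (a * (d:ℝ))) + L2 * (1 / (d:ℝ)) := by ring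
      rw [hdist2]
      rw [hdist] at hmul
      linarith [t1, t2, t3]
    calc _ ≤ L2 * (94 * Real.exp 1 * (1 + a) / (a * (d:ℝ)) + 1 / (d:ℝ)) := step
      _ ≤ _ := mul_le_mul_of_nonneg_left hfinal_coef hL2pos.le
  -- final
  rw [hratio, abs_div, abs_of_pos (mul_pos hp0 hL2pos), div_le_iff₀ (mul_pos hp0 hL2pos)]
  calc |G - (1 + a) ^ d * L2|
      ≤ (1 + a) ^ d * ((66 * Real.exp 1 / (c * (d:ℝ))) * L4
          + Real.exp (-((d:ℝ) * c / 4 * δ ^ 2)) * L4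
          + π * Real.exp (-(2 / π ^ 2 * (c * (d:ℝ) * δ ^ 2)))) := hcore
    _ ≤ (1 + a) ^ d * (L2 * ((100 * Real.exp 1 * (1 + a) / a + 1) / (d:ℝ))) :=
        mul_le_mul_of_nonneg_left hRle hp0.le
    _ = (100 * Real.exp 1 * (1 + a) / a + 1) / (d:ℝ) * ((1 + a) ^ d * L2) := by ring

lemma Isym (a : ℝ) (d : ℕ) :
    (∫ u in (0:ℝ)..(2*π), (1 + a * Real.cos u) ^ d * (a * Real.cos u))
      = 2 * a * ∫ u in (0:ℝ)..π, (1 + a * Real.cos u) ^ d * Real.cos u := by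
  have hg : Continuous (fun u : ℝ => (1 + a * Real.cos u) ^ d * Real.cos u) :=
    ((continuous_const.add (continuous_const.mul Real.continuous_cos)).pow d).mul
      Real.continuous_cos
  have h1 : (∫ u in (0:ℝ)..(2*π), (1 + a * Real.cos u) ^ d * (a * Real.cos u))
      = a * ∫ u in (0:ℝ)..(2*π), (1 + a * Real.cos u) ^ d * Real.cos u := by
    rw [← intervalIntegral.integral_const_mul]
    apply intervalIntegral.integral_congr
    intro u _
    ring
  have h2 : (∫ u in (0:ℝ)..(2*π), (1 + a * Real.cos u) ^ d * Real.cos u)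
      = (∫ u in (0:ℝ)..π, (1 + a * Real.cos u) ^ d * Real.cos u)
        + ∫ u in π..(2*π), (1 + a * Real.cos u) ^ d * Real.cos u :=
    (integral_add_adjacent_intervals (hg.intervalIntegrable _ _)
      (hg.intervalIntegrable _ _)).symm
  have h3 : (∫ u in (0:ℝ)..π, (1 + a * Real.cos u) ^ d * Real.cos u)
      = ∫ u in π..(2*π), (1 + a * Real.cos u) ^ d * Real.cos u := by
    have h := intervalIntegral.integral_comp_sub_left (a := (0:ℝ)) (b := π)
      (fun u => (1 + a * Real.cos u) ^ d * Real.cos u) (2*π)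
    simp only [Real.cos_two_pi_sub] at h
    rw [show 2*π - π = π by ring, show 2*π - 0 = 2*π by ring] at h
    exact h
  rw [h1, h2, ← h3]
  ring

lemma part2 (a : ℝ) (ha : 0 < a) (I : ℕ → ℝ)
    (hkey : ∃ C : ℝ, ∀ᶠ d : ℕ in atTop,
      |I d / ((1 + a) ^ d * Real.sqrt (2 * π * a * (1 + a) / d)) - 1| ≤ C / d) :
    Tendsto (fun d : ℕ => Real.log (2 * π * I d) / d) atTop
      (nhds (Real.log (1 + a))) := by
  obtain ⟨C, hC⟩ := hkey
  have h1a : (0:ℝ) < 1 + a := by linarith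
  have hhalf : ∀ᶠ d : ℕ in atTop, C / (d:ℝ) ≤ 1/2 :=
    (tendsto_const_div_atTop_nhds_zero_nat C).eventually_le_const (by norm_num)
  set K : ℝ := |Real.log (2*π)| + |Real.log (2*π*a*(1+a))| / 2 + 1 with hKdef
  have hbound : ∀ᶠ d : ℕ in atTop,
      |Real.log (2*π*I d) / d - Real.log (1+a)| ≤ (K + Real.log d / 2) / d := by
    filter_upwards [hC, hhalf, eventually_ge_atTop 1] with d hCd hhd hd1
    have hd0 : (0:ℝ) < d := by exact_mod_cast Nat.pos_of_ne_zero (by omega)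
    have hd1' : (1:ℝ) ≤ (d:ℝ) := by exact_mod_cast hd1
    have harg : (0:ℝ) < 2*π*a*(1+a)/(d:ℝ) := by positivity
    have hsq0 : 0 < Real.sqrt (2*π*a*(1+a)/(d:ℝ)) := Real.sqrt_pos.mpr harg
    have hDen0 : (0:ℝ) < (1+a)^d * Real.sqrt (2*π*a*(1+a)/(d:ℝ)) :=
      mul_pos (pow_pos h1a d) hsq0
    set Den := (1+a)^d * Real.sqrt (2*π*a*(1+a)/(d:ℝ)) with hDdef
    set R := I d / Den with hRdef
    have hRnear : |R - 1| ≤ 1/2 := le_trans hCd hhd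
    have hR12 : 1/2 ≤ R ∧ R ≤ 3/2 := by
      have := abs_le.mp hRnear; constructor <;> linarith [this.1, this.2]
    have hR0 : 0 < R := by linarith [hR12.1]
    have hIR : I d = Den * R := by
      rw [hRdef]; field_simp
    have hI0 : 0 < I d := by rw [hIR]; exact mul_pos hDen0 hR0
    have hlog1 : Real.log (2*π*I d) = Real.log (2*π) + Real.log Den + Real.log R := by
      rw [hIR, show 2*π*(Den*R) = (2*π) * Den * R by ring,
        Real.log_mul (by positivity) hR0.ne', Real.log_mul (by positivity) hDen0.ne']
    have hlogDen : Real.log Den = d * Real.log (1+a)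
        + (Real.log (2*π*a*(1+a)) - Real.log d) / 2 := by
      rw [hDdef, Real.log_mul (by positivity) hsq0.ne', Real.log_pow,
        Real.log_sqrt harg.le, Real.log_div (by positivity) hd0.ne']
    have hmain : Real.log (2*π*I d) / d - Real.log (1+a)
        = (Real.log (2*π) + (Real.log (2*π*a*(1+a)) - Real.log d)/2 + Real.log R) / d := by
      rw [hlog1, hlogDen]
      field_simp
      ring
    rw [hmain]
    have hlogR : |Real.log R| ≤ 1 := by
      rw [abs_le]; constructor
      · have h2 : Real.log (1/2) ≤ Real.log R :=
          Real.log_le_log (by norm_num) hR12.1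
        have h3 : Real.log (1/2) = - Real.log 2 := by
          rw [show (1:ℝ)/2 = 2⁻¹ by norm_num, Real.log_inv]
        have h4 : Real.log 2 ≤ 1 := by
          have := Real.log_le_sub_one_of_pos (by norm_num : (0:ℝ) < 2); linarith
        linarith
      · have := Real.log_le_sub_one_of_pos hR0
        linarith [hR12.2]
    have hlogd : 0 ≤ Real.log d := Real.log_nonneg hd1'
    rw [abs_div, abs_of_pos hd0]
    have htri : |Real.log (2*π) + (Real.log (2*π*a*(1+a)) - Real.log d)/2 + Real.log R|
        ≤ |Real.log (2*π)| + (|Real.log (2*π*a*(1+a))| + Real.log d)/2 + 1 := by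
      have h5 := abs_add_le (Real.log (2*π) + (Real.log (2*π*a*(1+a)) - Real.log (d:ℝ))/2)
        (Real.log R)
      have h6 := abs_add_le (Real.log (2*π)) ((Real.log (2*π*a*(1+a)) - Real.log (d:ℝ))/2)
      have h7 : |Real.log (2*π*a*(1+a)) - Real.log (d:ℝ)|
          ≤ |Real.log (2*π*a*(1+a))| + |Real.log (d:ℝ)| := by
        rw [sub_eq_add_neg]
        exact (abs_add_le _ _).trans (by rw [abs_neg])
      have h8 : |(Real.log (2*π*a*(1+a)) - Real.log (d:ℝ))/2|
          = |Real.log (2*π*a*(1+a)) - Real.log (d:ℝ)|/2 := by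
        rw [abs_div]; norm_num
      have h9 : |Real.log (d:ℝ)| = Real.log (d:ℝ) := abs_of_nonneg hlogd
      linarith [hlogR]
    gcongr
    rw [hKdef]
    linarith [htri]
  have hg0 : Tendsto (fun d : ℕ => (K + Real.log d / 2) / d) atTop (nhds 0) := by
    have hK : Tendsto (fun d : ℕ => K / d) atTop (nhds 0) :=
      tendsto_const_div_atTop_nhds_zero_nat K
    have hlog : Tendsto (fun x : ℝ => Real.log x / x) atTop (nhds 0) :=
      Real.isLittleO_log_id_atTop.tendsto_div_nhds_zero
    have hlogn : Tendsto (fun d : ℕ => Real.log d / d) atTop (nhds 0) :=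
      hlog.comp tendsto_natCast_atTop_atTop
    have hsum := hK.add (hlogn.mul_const (1/2))
    have hsum0 : Tendsto (fun d : ℕ => K / d + (Real.log d / d) * (1/2)) atTop (nhds 0) := by
      simpa using hsum
    apply hsum0.congr
    intro d
    ring
  have hzero : Tendsto (fun d : ℕ => Real.log (2*π*I d)/d - Real.log (1+a)) atTop (nhds 0) := by
    apply squeeze_zero_norm' _ hg0
    filter_upwards [hbound] with d hd
    simpa [Real.norm_eq_abs] using hd
  have hfin := hzero.add_const (Real.log (1+a))
  simpa using hfin
end LaplaceAux

open intervalIntegral in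
/-- (Laplace asymptotic.) Fix `r, t > 0` and set
`I_d = ∫₀^{2π} (1 + rt cos u)^d rt cos u du`. Then
`I_d = (1+rt)^d √(2π rt(1+rt)/d) (1 + O(1/d))` as `d → ∞`, and consequently
`(1/d) log(2π I_d) → log(1+rt)`. -/
theorem laplace_asymptotic_melnikov (r t : ℝ) (hr : 0 < r) (ht : 0 < t)
    (I : ℕ → ℝ)
    (hI : ∀ d, I d = ∫ u in (0:ℝ)..(2 * Real.pi),
      (1 + r * t * Real.cos u) ^ d * (r * t * Real.cos u)) :
    (∃ C : ℝ, ∀ᶠ d : ℕ in atTop,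
      |I d / ((1 + r * t) ^ d * Real.sqrt (2 * Real.pi * (r * t) * (1 + r * t) / d)) - 1|
        ≤ C / d) ∧
    Tendsto (fun d : ℕ => Real.log (2 * Real.pi * I d) / d) atTop
      (nhds (Real.log (1 + r * t))) := by
  have ha : 0 < r * t := mul_pos hr ht
  have hIeq : ∀ d : ℕ, I d
      = 2 * (r * t) * ∫ u in (0:ℝ)..Real.pi, (1 + r * t * Real.cos u) ^ d * Real.cos u := by
    intro d
    rw [hI d]
    exact Isym (r * t) d
  have hkey := key (r * t) ((r * t) / (1 + (r * t))) ha rfl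
  have hconj1 : ∃ C : ℝ, ∀ᶠ d : ℕ in atTop,
      |I d / ((1 + r * t) ^ d * Real.sqrt (2 * Real.pi * (r * t) * (1 + r * t) / d)) - 1|
        ≤ C / d := by
    refine ⟨100 * Real.exp 1 * (1 + r * t) / (r * t) + 1, ?_⟩
    filter_upwards [hkey] with d hd
    rw [hIeq d]
    exact hd
  exact ⟨hconj1, part2 (r * t) ha I hconj1⟩
end
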